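/- Let G be a locally compact Hausdorff group acting with the convergence property on a compact Hausdorff space T with |T| ≥ 3. Then the closure of G in the attractor sum X = G ⊔ T is a quasi-Specker compactification of G; in particular, if the limit set Λ is totally disconnected, this closure is a Specker compactification of G. -/

import Mathlib

open Filter Topology Set Pointwise

set_option linter.unusedSectionVars false
set_option linter.unusedVariables false
set_option maxHeartbeats 1000000

/-- A (filter representing a) net on `G` collapses to `a` except at `b`, for the action `act`
on `T`: uniform convergence to the constant `a` on compact subsets of `T \ {b}`. -/
def CollapsesF {G T : Type*} [TopologicalSpace T] (act : G → T → T)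
    (l : Filter G) (a b : T) : Prop :=
  ∀ K : Set T, IsCompact K → b ∉ K → ∀ U ∈ nhds a, ∀ᶠ g in l, ∀ k ∈ K, act g k ∈ U

/-- The action `act` of `G` on `T` has the convergence property. -/
def IsConvergenceF {G T : Type*} [TopologicalSpace G] [TopologicalSpace T]
    (act : G → T → T) : Prop :=
  ∀ l : Filter G, l.NeBot → (∀ x : G, ¬ ClusterPt x l) →
    ∃ l' : Filter G, l' ≤ l ∧ l'.NeBot ∧ ∃ a b : T, CollapsesF act l' a b

/-- The limit set: the set of attractive points of collapsing nets. -/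
def limitSetF {G T : Type*} [TopologicalSpace T] (act : G → T → T) : Set T :=
  {a | ∃ b : T, ∃ l : Filter G, l.NeBot ∧ CollapsesF act l a b}

/-- The set of attractor points of a subset `H ⊆ G` in `T`: points `u` such that some
net on `H` collapses to `u` except at some `v`. -/
def attractorPtsF {G T : Type*} [TopologicalSpace T] (act : G → T → T) (H : Set G) : Set T :=
  {u | ∃ v : T, ∃ l : Filter G, l.NeBot ∧ l ≤ Filter.principal H ∧ CollapsesF act l u v}

/-- `Y` together with an embedding `ι : G → Y` is a quasi-Specker compactification of `G`:
a compactum containing `G` as a dense open subset, such that the extension of right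
multiplications by the identity on the boundary is continuous on `G × Y`, and each left
translation extends continuously to `Y`. -/
structure IsQuasiSpecker (G : Type*) [Group G] [TopologicalSpace G]
    (Y : Type*) [TopologicalSpace Y] (ι : G → Y) : Prop where
  compact : CompactSpace Y
  t2 : T2Space Y
  emb : Topology.IsEmbedding ι
  open_range : IsOpen (Set.range ι)
  dense_range : Dense (Set.range ι)
  right_cont : ∃ R : G → Y → Y, (∀ g h : G, R g (ι h) = ι (h * g)) ∧
    (∀ (g : G) (y : Y), y ∉ Set.range ι → R g y = y) ∧
    Continuous fun p : G × Y => R p.1 p.2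
  left_ext : ∀ g : G, ∃ Lg : Y → Y, Continuous Lg ∧ ∀ h : G, Lg (ι h) = ι (g * h)


section pure

variable {G T : Type*}

theorem exists_three (hT : 3 ≤ (Set.univ : Set T).encard) :
    ∃ x₁ x₂ x₃ : T, x₁ ≠ x₂ ∧ x₁ ≠ x₃ ∧ x₂ ≠ x₃ := by
  obtain ⟨s, -, hs⟩ := Set.exists_subset_encard_eq hT
  obtain ⟨a, b, c, hab, hac, hbc, rfl⟩ := Set.encard_eq_three.mp hs
  exact ⟨a, b, c, hab, hac, hbc⟩

variable [TopologicalSpace T]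

theorem CollapsesF.mono {act : G → T → T} {l l' : Filter G} {a b : T}
    (h : CollapsesF act l a b) (hle : l' ≤ l) : CollapsesF act l' a b :=
  fun K hK hbK U hU => (h K hK hbK U hU).filter_mono hle

theorem CollapsesF.tendsto {act : G → T → T} {l : Filter G} {a b x : T}
    (h : CollapsesF act l a b) (hx : x ≠ b) : Tendsto (fun g => act g x) l (𝓝 a) := by
  rw [Filter.tendsto_def]
  intro U hU
  have hb : b ∉ ({x} : Set T) := by simp [Ne.symm hx]
  have := h {x} isCompact_singleton hb U hU
  exact this.mono fun g hg => hg x rfl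

theorem attractorPtsF_empty {act : G → T → T} : attractorPtsF act (∅ : Set G) = ∅ := by
  ext u
  simp only [attractorPtsF, mem_setOf_eq, mem_empty_iff_false, iff_false, not_exists]
  rintro v l ⟨hl, hle, -⟩
  rw [principal_empty, le_bot_iff] at hle
  exact hl.ne (hle)

theorem attractorPtsF_mono {act : G → T → T} {H H' : Set G} (h : H ⊆ H') :
    attractorPtsF act H ⊆ attractorPtsF act H' := by
  rintro u ⟨v, l, hl, hle, hc⟩
  exact ⟨v, l, hl, hle.trans (principal_mono.mpr h), hc⟩

theorem attractorPtsF_univ {act : G → T → T} :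
    attractorPtsF act (univ : Set G) = limitSetF act := by
  ext u
  constructor
  · rintro ⟨v, l, hl, -, hc⟩; exact ⟨v, l, hl, hc⟩
  · rintro ⟨v, l, hl, hc⟩; exact ⟨v, l, hl, le_principal_iff.mpr univ_mem, hc⟩

end pure
section smul

variable {G T : Type*} [Group G] [TopologicalSpace G] [IsTopologicalGroup G]
  [TopologicalSpace T] [T2Space T] [MulAction G T] [ContinuousSMul G T]

theorem clusterPt_smul_eq {l : Filter G} {a b : T}
    (h : CollapsesF (fun (g : G) (t : T) => g • t) l a b)
    {g0 : G} (hc : ClusterPt g0 l) {x : T} (hx : x ≠ b) : g0 • x = a := by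
  have ht : Tendsto (fun g : G => g • x) l (𝓝 a) := h.tendsto hx
  have hca : ContinuousAt (fun g : G => g • x) g0 :=
    (continuous_id.smul continuous_const).continuousAt
  have : ClusterPt (g0 • x) (𝓝 a) := hc.map hca ht
  exact t2_iff_nhds.mp inferInstance this

theorem CollapsesF.not_clusterPt (hT : 3 ≤ (Set.univ : Set T).encard)
    {l : Filter G} (hl : l.NeBot) {a b : T}
    (h : CollapsesF (fun (g : G) (t : T) => g • t) l a b) (g0 : G) : ¬ ClusterPt g0 l := by
  intro hc
  obtain ⟨x₁, x₂, x₃, h12, h13, h23⟩ := exists_three hT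
  have key : ∃ x y : T, x ≠ y ∧ x ≠ b ∧ y ≠ b := by
    by_cases h1 : x₁ = b
    · exact ⟨x₂, x₃, h23, fun hh => h12 (h1.trans hh.symm), fun hh => h13 (h1.trans hh.symm)⟩
    · by_cases h2 : x₂ = b
      · exact ⟨x₁, x₃, h13, h1, fun hh => h23 (h2.trans hh.symm)⟩
      · exact ⟨x₁, x₂, h12, h1, h2⟩
  obtain ⟨x, y, hxy, hxb, hyb⟩ := key
  have e1 := clusterPt_smul_eq h hc hxb
  have e2 := clusterPt_smul_eq h hc hyb
  exact hxy (MulAction.injective g0 (e1.trans e2.symm))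

theorem compl_mem_of_noncluster {l : Filter G} [hl : l.NeBot]
    (h : ∀ g : G, ¬ ClusterPt g l) {Q : Set G} (hQ : IsCompact Q) : Qᶜ ∈ l := by
  by_contra hn
  have hne : (l ⊓ Filter.principal Q).NeBot := by
    rw [Filter.neBot_iff]
    intro hbot
    exact hn (Filter.inf_principal_eq_bot.mp hbot)
  obtain ⟨g, -, hg⟩ := @hQ (l ⊓ Filter.principal Q) hne inf_le_right
  exact h g (hg.mono inf_le_left)

end smul
section trap

variable {G T : Type*} [Group G] [TopologicalSpace G] [IsTopologicalGroup G]
  [TopologicalSpace T] [T2Space T] [MulAction G T] [ContinuousSMul G T]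

/-- The "trap" set: group elements moving at least two of the three reference points into `V`. -/
def trapSet (x₁ x₂ x₃ : T) (V : Set T) : Set G :=
  {g | (g • x₁ ∈ V ∧ g • x₂ ∈ V) ∨ (g • x₁ ∈ V ∧ g • x₃ ∈ V) ∨ (g • x₂ ∈ V ∧ g • x₃ ∈ V)}

theorem isClosed_trapSet (x₁ x₂ x₃ : T) {V : Set T} (hV : IsClosed V) :
    IsClosed (trapSet x₁ x₂ x₃ V : Set G) := by
  have hc : ∀ x : T, IsClosed {g : G | g • x ∈ V} := fun x =>
    hV.preimage (continuous_id.smul continuous_const)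
  exact (((hc x₁).inter (hc x₂)).union (((hc x₁).inter (hc x₃)).union ((hc x₂).inter (hc x₃))))

theorem trapSet_mem {x₁ x₂ x₃ : T} (h12 : x₁ ≠ x₂) (h13 : x₁ ≠ x₃) (h23 : x₂ ≠ x₃)
    {l : Filter G} {a b : T} (hc : CollapsesF (fun (g : G) (t : T) => g • t) l a b)
    {V : Set T} (hV : V ∈ 𝓝 a) : trapSet x₁ x₂ x₃ V ∈ l := by
  have key : ∀ x : T, x ≠ b → ∀ᶠ g in l, g • x ∈ V := fun x hx => (hc.tendsto hx).eventually_mem hV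
  by_cases h1 : x₁ = b
  · have e2 := key x₂ (fun hh => h12 (h1.trans hh.symm))
    have e3 := key x₃ (fun hh => h13 (h1.trans hh.symm))
    exact (e2.and e3).mono fun g hg => Or.inr (Or.inr hg)
  · by_cases h2 : x₂ = b
    · have e1 := key x₁ h1
      have e3 := key x₃ (fun hh => h23 (h2.trans hh.symm))
      exact (e1.and e3).mono fun g hg => Or.inr (Or.inl hg)
    · have e1 := key x₁ h1
      have e2 := key x₂ h2
      exact (e1.and e2).mono fun g hg => Or.inl hg

theorem attractor_trapSet {x₁ x₂ x₃ : T} (h12 : x₁ ≠ x₂) (h13 : x₁ ≠ x₃) (h23 : x₂ ≠ x₃)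
    {V : Set T} (hV : IsClosed V) {H : Set G} (hH : H ⊆ trapSet x₁ x₂ x₃ V) :
    attractorPtsF (fun (g : G) (t : T) => g • t) H ⊆ V := by
  rintro u ⟨v, l, hl, hlH, hc⟩
  by_contra huV
  have hVc : Vᶜ ∈ 𝓝 u := hV.isOpen_compl.mem_nhds huV
  have key : ∀ x : T, x ≠ v → ∀ᶠ g in l, g • x ∉ V := fun x hx =>
    (hc.tendsto hx).eventually_mem hVc
  have hmem : ∀ᶠ g in l, g ∈ trapSet x₁ x₂ x₃ V :=
    Filter.mem_of_superset (le_principal_iff.mp hlH) (fun g hg => hH hg)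
  by_cases h1 : x₁ = v
  · have e2 := key x₂ (fun hh => h12 (h1.trans hh.symm))
    have e3 := key x₃ (fun hh => h13 (h1.trans hh.symm))
    obtain ⟨g, hg2, hg3, hgt⟩ := (e2.and (e3.and hmem)).exists
    rcases hgt with ⟨-, hB⟩ | ⟨-, hB⟩ | ⟨hB, -⟩ <;> tauto
  · by_cases h2 : x₂ = v
    · have e1 := key x₁ h1
      have e3 := key x₃ (fun hh => h23 (h2.trans hh.symm))
      obtain ⟨g, hg1, hg3, hgt⟩ := (e1.and (e3.and hmem)).exists
      rcases hgt with ⟨hA, -⟩ | ⟨hA, hB⟩ | ⟨-, hB⟩ <;> tauto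
    · have e1 := key x₁ h1
      have e2 := key x₂ h2
      obtain ⟨g, hg1, hg2, hgt⟩ := (e1.and (e2.and hmem)).exists
      rcases hgt with ⟨hA, hB⟩ | ⟨hA, -⟩ | ⟨hB, -⟩ <;> tauto

end trap
section mulcompact

variable {G T : Type*} [Group G] [TopologicalSpace G] [IsTopologicalGroup G] [LocallyCompactSpace G]
  [TopologicalSpace T] [T2Space T] [MulAction G T] [ContinuousSMul G T]

theorem attractor_mul_compact {H K : Set G} (hK : IsCompact K) :
    attractorPtsF (fun (g : G) (t : T) => g • t) (H * K) ⊆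
      attractorPtsF (fun (g : G) (t : T) => g • t) H := by
  rintro u ⟨v, l, hl, hlH, hc⟩
  let U := Ultrafilter.of l
  have hUl : ↑U ≤ l := Ultrafilter.of_le l
  have hUH : (H * K : Set G) ∈ U := hUl (le_principal_iff.mp hlH)
  have hcU : CollapsesF (fun (g : G) (t : T) => g • t) U u v := hc.mono hUl
  have hch : ∀ g : G, ∃ k : G, g ∈ H * K → k ∈ K ∧ g * k⁻¹ ∈ H := by
    intro g
    by_cases hg : g ∈ H * K
    · obtain ⟨h, hh, k, hk, rfl⟩ := hg
      exact ⟨k, fun _ => ⟨hk, by simpa [mul_assoc] using hh⟩⟩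
    · exact ⟨1, fun h => absurd h hg⟩
  choose κ hκ using hch
  have hKmem : K ∈ Ultrafilter.map κ U := by
    rw [Ultrafilter.mem_map]
    exact Filter.mem_of_superset hUH (fun g hg => (hκ g hg).1)
  obtain ⟨k₀, hk₀K, hk₀⟩ := hK.ultrafilter_le_nhds (Ultrafilter.map κ U)
    (le_principal_iff.mpr hKmem)
  refine ⟨k₀ • v, Filter.map (fun g => g * (κ g)⁻¹) (U : Filter G), Filter.map_neBot, ?_, ?_⟩
  · rw [le_principal_iff, Filter.mem_map]
    exact Filter.mem_of_superset hUH (fun g hg => (hκ g hg).2)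
  · intro Kc hKc hKcv Uo hUo
    -- find a compact neighborhood N' of k₀ with N' • v disjoint from Kc
    have hopen : IsOpen ((fun k : G => k • v) ⁻¹' Kcᶜ) :=
      hKc.isClosed.isOpen_compl.preimage (continuous_id.smul continuous_const)
    have hk₀mem : k₀ ∈ (fun k : G => k • v) ⁻¹' Kcᶜ := by simpa using hKcv
    obtain ⟨N', hN'nhds, hN'sub, hN'cpt⟩ :=
      local_compact_nhds (hopen.mem_nhds hk₀mem)
    set L : Set T := (fun p : G × T => p.1⁻¹ • p.2) '' (N' ×ˢ Kc) with hLdef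
    have hLcpt : IsCompact L :=
      (hN'cpt.prod hKc).image ((continuous_fst.inv).smul continuous_snd)
    have hvL : v ∉ L := by
      rintro ⟨⟨k, x⟩, ⟨hk, hx⟩, hvx⟩
      have : x = k • v := by
        have := congrArg (fun t => k • t) hvx
        simp only [smul_inv_smul] at this
        exact this
      exact hN'sub hk (this ▸ hx)
    have ev1 := hcU L hLcpt hvL Uo hUo
    have ev2 : ∀ᶠ g in (U : Filter G), κ g ∈ N' := hk₀ hN'nhds
    rw [Filter.eventually_map]
    filter_upwards [ev1, ev2] with g hg1 hg2
    intro x hx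
    have hmem : (κ g)⁻¹ • x ∈ L := ⟨(κ g, x), ⟨hg2, hx⟩, rfl⟩
    have := hg1 _ hmem
    simpa [mul_smul] using this

theorem attractor_translate {H : Set G} (g : G) {u : T}
    (hu : u ∈ attractorPtsF (fun (g : G) (t : T) => g • t) ((fun h => g * h) ⁻¹' H)) :
    g • u ∈ attractorPtsF (fun (g : G) (t : T) => g • t) H := by
  obtain ⟨v, l, hl, hlH, hc⟩ := hu
  refine ⟨v, Filter.map (fun h => g * h) l, Filter.map_neBot, ?_, ?_⟩
  · rw [le_principal_iff, Filter.mem_map]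
    exact le_principal_iff.mp hlH
  · intro Kc hKc hKcv Uo hUo
    have hUo' : (fun t : T => g • t) ⁻¹' Uo ∈ 𝓝 u := by
      have hcont : ContinuousAt (fun t : T => g • t) u :=
        (continuous_const.smul continuous_id).continuousAt
      exact hcont hUo
    have := hc Kc hKc hKcv _ hUo'
    rw [Filter.eventually_map]
    filter_upwards [this] with h hh
    intro x hx
    simpa [mul_smul] using hh x hx

end mulcompact
section limitclosed

variable {G T : Type*} [Group G] [TopologicalSpace G] [IsTopologicalGroup G] [LocallyCompactSpace G]
  [TopologicalSpace T] [CompactSpace T] [T2Space T] [MulAction G T] [ContinuousSMul G T]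

theorem trapSet_mono (x₁ x₂ x₃ : T) {V V' : Set T} (h : V ⊆ V') :
    (trapSet x₁ x₂ x₃ V : Set G) ⊆ trapSet x₁ x₂ x₃ V' := by
  rintro g (⟨h1, h2⟩ | ⟨h1, h2⟩ | ⟨h1, h2⟩)
  · exact Or.inl ⟨h h1, h h2⟩
  · exact Or.inr (Or.inl ⟨h h1, h h2⟩)
  · exact Or.inr (Or.inr ⟨h h1, h h2⟩)

theorem isClosed_limitSetF (hconv : IsConvergenceF (fun (g : G) (t : T) => g • t))
    (hT : 3 ≤ (Set.univ : Set T).encard) :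
    IsClosed (limitSetF (fun (g : G) (t : T) => g • t)) := by
  obtain ⟨x₁, x₂, x₃, h12, h13, h23⟩ := exists_three hT
  rw [← closure_subset_iff_isClosed]
  intro t ht
  -- the index type of the filter basis
  let P := {VQ : Set T × Set G // (VQ.1 ∈ 𝓝 t ∧ IsClosed VQ.1) ∧ IsCompact VQ.2}
  have hPne : Nonempty P := ⟨⟨(Set.univ, ∅), ⟨univ_mem, isClosed_univ⟩, isCompact_empty⟩⟩
  let S : P → Set G := fun p => trapSet x₁ x₂ x₃ p.1.1 ∩ (p.1.2)ᶜ
  -- each S p is a member of a collapsing filter, hence nonempty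
  have hSne : ∀ p : P, (S p).Nonempty := by
    rintro ⟨⟨V, Q⟩, ⟨hVnhds, hVcl⟩, hQ⟩
    have : (interior V ∩ limitSetF (fun (g : G) (t : T) => g • t)).Nonempty := by
      exact mem_closure_iff.mp ht _ isOpen_interior (mem_interior_iff_mem_nhds.mpr hVnhds)
    obtain ⟨a, haV, haL⟩ := this
    obtain ⟨b, la, hla, hcol⟩ := haL
    have h1 : trapSet x₁ x₂ x₃ V ∈ la :=
      trapSet_mem h12 h13 h23 hcol (mem_nhds_iff.mpr ⟨interior V, interior_subset, isOpen_interior, haV⟩)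
    have hnc : ∀ g : G, ¬ ClusterPt g la := hcol.not_clusterPt hT hla
    have h2 : Qᶜ ∈ la := by haveI := hla; exact compl_mem_of_noncluster (l := la) hnc hQ
    exact Filter.nonempty_of_mem (Filter.inter_mem h1 h2)
  let l : Filter G := ⨅ p : P, Filter.principal (S p)
  have hdir : Directed (· ≥ ·) (fun p : P => Filter.principal (S p)) := by
    rintro ⟨⟨V, Q⟩, ⟨hVn, hVc⟩, hQ⟩ ⟨⟨V', Q'⟩, ⟨hVn', hVc'⟩, hQ'⟩
    refine ⟨⟨(V ∩ V', Q ∪ Q'), ⟨Filter.inter_mem hVn hVn', hVc.inter hVc'⟩, hQ.union hQ'⟩, ?_, ?_⟩ <;>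
      · simp only [ge_iff_le, le_principal_iff, Filter.mem_principal]
        refine inter_subset_inter (trapSet_mono _ _ _ (by intro x hx; simp_all)) ?_
        simp only [compl_union, compl_subset_compl]
        first
        | exact fun x hx => hx.1
        | exact fun x hx => hx.2
  have hlne : l.NeBot := by
    have : ∀ p : P, (Filter.principal (S p)).NeBot := fun p => principal_neBot_iff.mpr (hSne p)
    exact Filter.iInf_neBot_of_directed hdir this
  have hSmem : ∀ p : P, S p ∈ l := fun p => Filter.mem_iInf_of_mem p (Filter.mem_principal_self _)
  have hlnc : ∀ g : G, ¬ ClusterPt g l := by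
    intro g0 hc
    obtain ⟨Q, hQcpt, hQnhds⟩ := exists_compact_mem_nhds g0
    have hp : S ⟨(Set.univ, Q), ⟨univ_mem, isClosed_univ⟩, hQcpt⟩ ∈ l := hSmem _
    have : (∅ : Set G) ∈ 𝓝 g0 ⊓ l := by
      refine Filter.mem_of_superset (Filter.inter_mem_inf hQnhds hp) ?_
      rintro g ⟨hg1, -, hg2⟩
      exact hg2 hg1
    exact hc.ne (Filter.empty_mem_iff_bot.mp this)
  obtain ⟨l', hle, hl'ne, a, b, hcol⟩ := hconv l hlne hlnc
  -- a ∈ every closed neighborhood of t, hence a = t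
  have hat : a = t := by
    by_contra hne
    obtain ⟨Oa, Ot, hOa, hOt, haOa, htOt, hdisj⟩ := t2_separation hne
    obtain ⟨V, hVnhds, hVcl, hVsub⟩ := exists_mem_nhds_isClosed_subset (hOt.mem_nhds htOt)
    set p : P := ⟨(V, ∅), ⟨hVnhds, hVcl⟩, isCompact_empty⟩
    have hl'p : l' ≤ Filter.principal (S p) := le_principal_iff.mpr (hle (hSmem p))
    have haV : a ∈ V :=
      attractor_trapSet h12 h13 h23 hVcl (fun g hg => hg.1) ⟨b, l', hl'ne, hl'p, hcol⟩
    exact hdisj.le_bot ⟨haOa, hVsub haV⟩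
  exact hat ▸ ⟨b, l', hl'ne, hcol⟩

end limitclosed

theorem clusterPt_mem_closed {α : Type*} [TopologicalSpace α] {l : Filter α} {x : α}
    (h : ClusterPt x l) {C : Set α} (hC : IsClosed C) (hCl : C ∈ l) : x ∈ C := by
  have : ClusterPt x (Filter.principal C) := h.mono (le_principal_iff.mpr hCl)
  rwa [← mem_closure_iff_clusterPt, hC.closure_eq] at this

theorem mem_closed_of_le_nhds {α : Type*} [TopologicalSpace α] {l : Filter α} [l.NeBot] {x : α}
    (h : l ≤ 𝓝 x) {C : Set α} (hC : IsClosed C) (hCl : C ∈ l) : x ∈ C :=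
  clusterPt_mem_closed (ClusterPt.of_le_nhds h) hC hCl


/-- The closure of `G` in the attractor sum is a quasi-Specker compactification of `G`;
if moreover the limit set is totally disconnected, its boundary is totally disconnected,
i.e. it is a (complete) Specker compactification. -/
theorem closure_in_attractorSum_isQuasiSpecker {G T : Type*}
    [Group G] [TopologicalSpace G] [IsTopologicalGroup G] [LocallyCompactSpace G] [T2Space G]
    [TopologicalSpace T] [CompactSpace T] [T2Space T]
    [MulAction G T] [ContinuousSMul G T]
    (hconv : IsConvergenceF (fun (g : G) (t : T) => g • t))
    (hT : 3 ≤ (Set.univ : Set T).encard)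
    (X : Type*) [TopologicalSpace X] (i : G → X) (j : T → X)
    (hi : Function.Injective i) (hj : Function.Injective j)
    (hcover : Set.range i ∪ Set.range j = Set.univ)
    (hdisj : Set.range i ∩ Set.range j = ∅)
    (hchar : ∀ P : Set X, IsClosed P ↔
      IsClosed (i ⁻¹' P) ∧ IsClosed (j ⁻¹' P) ∧
        attractorPtsF (fun (g : G) (t : T) => g • t) (i ⁻¹' P) ⊆ j ⁻¹' P)
    (ι : G → ↥(closure (Set.range i)))
    (hι : ∀ g : G, (ι g : X) = i g) :
    IsQuasiSpecker G (↥(closure (Set.range i))) ι ∧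
      (IsTotallyDisconnected (limitSetF (fun (g : G) (t : T) => g • t)) →
        IsTotallyDisconnected (Set.range ι)ᶜ) := by
  classical
  obtain ⟨x₁, x₂, x₃, h12, h13, h23⟩ := exists_three hT
  -- basic set-theoretic facts
  have hne : ∀ (g : G) (t : T), i g ≠ j t := by
    intro g t h
    have : i g ∈ Set.range i ∩ Set.range j := ⟨mem_range_self g, h ▸ mem_range_self t⟩
    rw [hdisj] at this
    exact this
  have hpre_ii : ∀ s : Set G, i ⁻¹' (i '' s) = s := fun s => hi.preimage_image s
  have hpre_jj : ∀ s : Set T, j ⁻¹' (j '' s) = s := fun s => hj.preimage_image s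
  have hpre_ij : ∀ s : Set T, i ⁻¹' (j '' s) = ∅ := by
    intro s; ext g
    simp only [mem_preimage, mem_empty_iff_false, iff_false]
    rintro ⟨t, -, ht⟩
    exact hne g t ht.symm
  have hpre_ji : ∀ s : Set G, j ⁻¹' (i '' s) = ∅ := by
    intro s; ext t
    simp only [mem_preimage, mem_empty_iff_false, iff_false]
    rintro ⟨g, -, hg⟩
    exact hne g t hg
  have hmemA : ∀ x : X, x ∉ Set.range i → x ∈ Set.range j := by
    intro x hx
    have : x ∈ Set.range i ∪ Set.range j := hcover ▸ mem_univ x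
    rcases this with h | h
    exacts [absurd h hx, h]
  -- closedness of various sets
  have hclosed_j : ∀ D : Set T, IsClosed D → IsClosed (j '' D) := by
    intro D hD
    rw [hchar]
    rw [hpre_ij, hpre_jj]
    exact ⟨isClosed_empty, hD, by rw [attractorPtsF_empty]; exact empty_subset _⟩
  have hclosed_iB : ∀ C : Set G, IsClosed C → IsClosed (i '' C ∪ Set.range j) := by
    intro C hC
    rw [hchar]
    have e1 : i ⁻¹' (i '' C ∪ Set.range j) = C := by
      rw [preimage_union, hpre_ii, ← image_univ, hpre_ij, union_empty]
    have e2 : j ⁻¹' (i '' C ∪ Set.range j) = univ := by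
      rw [preimage_union, hpre_ji, ← image_univ, hpre_jj, empty_union]
    rw [e1, e2]
    exact ⟨hC, isClosed_univ, fun u _ => mem_univ u⟩
  have hBclosed : IsClosed (Set.range j) := by
    have := hclosed_j univ isClosed_univ
    rwa [image_univ] at this
  have hcompA : (Set.range j)ᶜ = Set.range i := by
    ext x
    simp only [mem_compl_iff]
    constructor
    · intro hx
      rcases hcover ▸ mem_univ x with h | h
      exacts [h, absurd h hx]
    · rintro ⟨g, rfl⟩ ⟨t, ht⟩
      exact hne g t ht.symm
  have hAopen : IsOpen (Set.range i) := by
    rw [← hcompA]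
    exact hBclosed.isOpen_compl
  have hicont : Continuous i := by
    rw [continuous_iff_isClosed]
    exact fun P hP => ((hchar P).mp hP).1
  have hjcont : Continuous j := by
    rw [continuous_iff_isClosed]
    exact fun P hP => ((hchar P).mp hP).2.1
  have hiopen : IsOpenMap i := by
    intro V hV
    have h1 : IsClosed (i '' Vᶜ ∪ Set.range j) := hclosed_iB _ hV.isClosed_compl
    have h2 : i '' V = (i '' Vᶜ ∪ Set.range j)ᶜ := by
      ext x
      simp only [mem_compl_iff, mem_union, not_or]
      constructor
      · rintro ⟨g, hg, rfl⟩
        refine ⟨fun ⟨g', hg', he⟩ => hg' (hi he ▸ hg), fun ⟨t, ht⟩ => hne g t ht.symm⟩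
      · rintro ⟨hx1, hx2⟩
        obtain ⟨g, rfl⟩ : x ∈ Set.range i := hcompA ▸ hx2
        refine ⟨g, ?_, rfl⟩
        by_contra hgV
        exact hx1 ⟨g, hgV, rfl⟩
    rw [h2]
    exact h1.isOpen_compl
  have hiemb : Topology.IsOpenEmbedding i :=
    Topology.IsOpenEmbedding.of_continuous_injective_isOpenMap hicont hi hiopen
  -- compact subsets of G have closed images
  have hattr_cpt : ∀ Q : Set G, IsCompact Q →
      attractorPtsF (fun (g : G) (t : T) => g • t) Q = ∅ := by
    intro Q hQ
    ext u
    simp only [mem_empty_iff_false, iff_false]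
    rintro ⟨v, l, hl, hlQ, hcol⟩
    haveI := hl
    obtain ⟨g, -, hg⟩ := hQ hlQ
    exact hcol.not_clusterPt hT hl g hg
  have hclosed_iQ : ∀ Q : Set G, IsCompact Q → IsClosed (i '' Q) := by
    intro Q hQ
    rw [hchar, hpre_ii, hpre_ji]
    exact ⟨hQ.isClosed, isClosed_empty, by simp [hattr_cpt Q hQ]⟩
  -- convergence criterion for ultrafilters on X
  have hU_le_nhds : ∀ (U : Ultrafilter X) (x : X),
      (∀ C : Set X, IsClosed C → C ∈ U → x ∈ C) → ↑U ≤ 𝓝 x := by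
    intro U x h s hs
    obtain ⟨V, hVs, hVo, hxV⟩ := mem_nhds_iff.mp hs
    have hV : V ∈ U := by
      rcases U.mem_or_compl_mem V with h' | h'
      · exact h'
      · exact absurd (h Vᶜ hVo.isClosed_compl h') (by simp [hxV])
    exact Filter.mem_of_superset hV hVs
    -- X is compact
  have hXcpt : CompactSpace X := by
    rw [← isCompact_univ_iff, isCompact_iff_ultrafilter_le_nhds]
    intro U hU
    rcases U.mem_or_compl_mem (Set.range i) with hA | hBc
    · set lG : Ultrafilter G := U.comap hi hA with hlGdef
      have hlGcoe : (lG : Filter G) = Filter.comap i ↑U := Ultrafilter.coe_comap U hi hA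
      have hmem_lG : ∀ C : Set X, C ∈ U → i ⁻¹' C ∈ lG := by
        intro C hC
        have : i ⁻¹' C ∈ Filter.comap i ↑U := Filter.preimage_mem_comap hC
        rwa [← hlGcoe] at this
      by_cases hcl : ∃ g : G, ClusterPt g ↑lG
      · obtain ⟨g, hg⟩ := hcl
        refine ⟨i g, mem_univ _, hU_le_nhds U (i g) ?_⟩
        intro C hC hCU
        exact clusterPt_mem_closed hg (hC.preimage hicont) (hmem_lG C hCU)
      · push_neg at hcl
        obtain ⟨l', hle, hl'ne, a, b, hcol⟩ := hconv ↑lG lG.neBot hcl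
        have hl'eq : l' = ↑lG := lG.unique hle hl'ne
        subst hl'eq
        refine ⟨j a, mem_univ _, hU_le_nhds U (j a) ?_⟩
        intro C hC hCU
        exact ((hchar C).mp hC).2.2 ⟨b, ↑lG, lG.neBot, le_principal_iff.mpr (hmem_lG C hCU), hcol⟩
    · rw [← hcompA, compl_compl] at hBc
      set lT : Ultrafilter T := U.comap hj hBc with hlTdef
      have hlTcoe : (lT : Filter T) = Filter.comap j ↑U := Ultrafilter.coe_comap U hj hBc
      obtain ⟨t, -, ht⟩ := (isCompact_univ : IsCompact (univ : Set T)).ultrafilter_le_nhds lT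
        (by simp)
      refine ⟨j t, mem_univ _, hU_le_nhds U (j t) ?_⟩
      intro C hC hCU
      have hpre : j ⁻¹' C ∈ lT := by
        have : j ⁻¹' C ∈ Filter.comap j ↑U := Filter.preimage_mem_comap hCU
        rwa [← hlTcoe] at this
      exact mem_closed_of_le_nhds ht (hC.preimage hjcont) hpre
  haveI := hXcpt
  -- X is Hausdorff
  have hXT2 : T2Space X := by
    rw [t2_iff_ultrafilter]
    intro x y U hx hy
    have hcomap_le : ∀ (hA : Set.range i ∈ U) (w : G), ↑U ≤ 𝓝 (i w) →
        (U.comap hi hA : Filter G) ≤ 𝓝 w := by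
      intro hA w hw V hV
      rw [Ultrafilter.coe_comap]
      exact Filter.mem_comap.mpr ⟨i '' interior V,
        hw ((hiopen _ isOpen_interior).mem_nhds ⟨w, mem_interior_iff_mem_nhds.mpr hV, rfl⟩),
        by rw [hpre_ii]; exact interior_subset⟩
    have hlimA : ∀ (w : G) (z : X), ↑U ≤ 𝓝 (i w) → ↑U ≤ 𝓝 z → i w = z := by
      intro w z hw hz
      have hA : Set.range i ∈ U := hw (hAopen.mem_nhds (mem_range_self w))
      obtain ⟨Q, hQcpt, hQn⟩ := exists_compact_mem_nhds w
      have hQU : i '' Q ∈ U := by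
        have h1 : i '' interior Q ∈ U :=
          hw ((hiopen _ isOpen_interior).mem_nhds ⟨w, mem_interior_iff_mem_nhds.mpr hQn, rfl⟩)
        exact Filter.mem_of_superset h1 (image_mono interior_subset)
      haveI : (U : Filter X).NeBot := U.neBot
      have hzQ : z ∈ i '' Q := mem_closed_of_le_nhds hz (hclosed_iQ Q hQcpt) hQU
      obtain ⟨w', -, rfl⟩ := hzQ
      have e1 := hcomap_le hA w hw
      have e2 := hcomap_le hA w' hz
      have : w = w' := t2_iff_ultrafilter.mp inferInstance (U.comap hi hA) e1 e2
      rw [this]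
    rcases U.mem_or_compl_mem (Set.range i) with hA | hBc
    · set lG : Ultrafilter G := U.comap hi hA with hlGdef
      have hlGcoe : (lG : Filter G) = Filter.comap i ↑U := Ultrafilter.coe_comap U hi hA
      have hmem_lG : ∀ C : Set X, C ∈ U → i ⁻¹' C ∈ lG := by
        intro C hC
        have : i ⁻¹' C ∈ Filter.comap i ↑U := Filter.preimage_mem_comap hC
        rwa [← hlGcoe] at this
      have himg : ∀ H : Set G, H ∈ lG → i '' H ∈ U := by
        intro H hH
        have hH' : H ∈ Filter.comap i ↑U := by rw [← hlGcoe]; exact hH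
        obtain ⟨S, hS, hSsub⟩ := Filter.mem_comap.mp hH'
        refine Filter.mem_of_superset (Filter.inter_mem hS hA) ?_
        rintro z ⟨hzS, g, rfl⟩
        exact ⟨g, hSsub hzS, rfl⟩
      by_cases hcl : ∃ g0 : G, ClusterPt g0 ↑lG
      · obtain ⟨g0, hg0⟩ := hcl
        have hconv' : (lG : Filter G) ≤ 𝓝 g0 := Ultrafilter.clusterPt_iff.mp hg0
        have hUg0 : ↑U ≤ 𝓝 (i g0) := by
          have hmap : (U : Filter X) = Filter.map i ↑lG := by
            rw [hlGcoe, Filter.map_comap, inf_eq_left.mpr (le_principal_iff.mpr hA)]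
          rw [hmap]
          exact le_trans (Filter.map_mono hconv') hicont.continuousAt
        rw [← hlimA g0 x hUg0 hx, ← hlimA g0 y hUg0 hy]
      · push_neg at hcl
        obtain ⟨l', hle, hl'ne, a, b, hcol⟩ := hconv ↑lG lG.neBot hcl
        have hl'eq : l' = ↑lG := lG.unique hle hl'ne
        subst hl'eq
        have hzlim : ∀ z : X, ↑U ≤ 𝓝 z → z = j a := by
          intro z hz
          have hzB : z ∈ Set.range j := by
            by_contra hzB
            obtain ⟨w, rfl⟩ : z ∈ Set.range i := hcompA ▸ hzB
            obtain ⟨Q, hQcpt, hQn⟩ := exists_compact_mem_nhds w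
            have hQU : i '' Q ∈ U := by
              have h1 : i '' interior Q ∈ U :=
                hz ((hiopen _ isOpen_interior).mem_nhds
                  ⟨w, mem_interior_iff_mem_nhds.mpr hQn, rfl⟩)
              exact Filter.mem_of_superset h1 (image_mono interior_subset)
            have hQlG : Q ∈ lG := by
              have := hmem_lG _ hQU
              rwa [hpre_ii] at this
            haveI : ((lG : Filter G) ⊓ Filter.principal Q).NeBot := by
              rw [inf_of_le_left (le_principal_iff.mpr hQlG)]
              exact lG.neBot
            obtain ⟨g0, -, hg0⟩ := hQcpt (inf_le_right (a := (lG : Filter G)))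
            exact hcl g0 (hg0.mono inf_le_left)
          obtain ⟨t, rfl⟩ := hzB
          by_contra hta
          have htne : a ≠ t := fun h => hta (by rw [h])
          obtain ⟨Oa, Ot, hOa, hOt, haOa, htOt, hdisjO⟩ := t2_separation htne
          obtain ⟨V, hVn, hVcl, hVsub⟩ := exists_mem_nhds_isClosed_subset (hOa.mem_nhds haOa)
          have htV : t ∉ V := fun h => hdisjO.le_bot ⟨hVsub h, htOt⟩
          have hHlG : trapSet x₁ x₂ x₃ V ∈ lG := trapSet_mem h12 h13 h23 hcol hVn
          have hPclosed : IsClosed (i '' trapSet x₁ x₂ x₃ V ∪ j '' V) := by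
            rw [hchar]
            have e1 : i ⁻¹' (i '' trapSet x₁ x₂ x₃ V ∪ j '' V) = trapSet x₁ x₂ x₃ V := by
              rw [preimage_union, hpre_ii, hpre_ij, union_empty]
            have e2 : j ⁻¹' (i '' trapSet x₁ x₂ x₃ V ∪ j '' V) = V := by
              rw [preimage_union, hpre_ji, hpre_jj, empty_union]
            rw [e1, e2]
            exact ⟨isClosed_trapSet _ _ _ hVcl, hVcl,
              attractor_trapSet h12 h13 h23 hVcl (fun g hg => hg)⟩
          have hPU : i '' trapSet x₁ x₂ x₃ V ∪ j '' V ∈ U :=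
            Filter.mem_of_superset (himg _ hHlG) subset_union_left
          haveI : (U : Filter X).NeBot := U.neBot
          have hmem := mem_closed_of_le_nhds hz hPclosed hPU
          rcases hmem with ⟨g', -, hg'⟩ | ⟨t', ht', he⟩
          · exact hne g' t hg'
          · exact htV (hj he ▸ ht')
        rw [hzlim x hx, hzlim y hy]
    · rw [← hcompA, compl_compl] at hBc
      set lT : Ultrafilter T := U.comap hj hBc with hlTdef
      have hlTcoe : (lT : Filter T) = Filter.comap j ↑U := Ultrafilter.coe_comap U hj hBc
      obtain ⟨t0, -, ht0⟩ := (isCompact_univ : IsCompact (univ : Set T)).ultrafilter_le_nhds lT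
        (by simp)
      have hzlim : ∀ z : X, ↑U ≤ 𝓝 z → z = j t0 := by
        intro z hz
        have hzB : z ∈ Set.range j := by
          by_contra hzB
          obtain ⟨w, rfl⟩ : z ∈ Set.range i := hcompA ▸ hzB
          have hAU : Set.range i ∈ U := hz (hAopen.mem_nhds (mem_range_self w))
          have h0 : (∅ : Set X) ∈ U := by
            rw [← hdisj]
            exact Filter.inter_mem hAU hBc
          exact U.neBot.ne (Filter.empty_mem_iff_bot.mp h0)
        obtain ⟨t, rfl⟩ := hzB
        by_contra hta
        have htne : t0 ≠ t := fun h => hta (by rw [h])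
        obtain ⟨O1, O2, hO1, hO2, h1m, h2m, hdisjO⟩ := t2_separation htne
        obtain ⟨D, hDn, hDcl, hDsub⟩ := exists_mem_nhds_isClosed_subset (hO1.mem_nhds h1m)
        have htD : t ∉ D := fun h => hdisjO.le_bot ⟨hDsub h, h2m⟩
        have hDlT : D ∈ lT := ht0 hDn
        have hjD : j '' D ∈ U := by
          have hDlT' : D ∈ Filter.comap j ↑U := by rw [← hlTcoe]; exact hDlT
          obtain ⟨S, hS, hSsub⟩ := Filter.mem_comap.mp hDlT'
          refine Filter.mem_of_superset (Filter.inter_mem hS hBc) ?_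
          rintro z ⟨hzS, t', rfl⟩
          exact ⟨t', hSsub hzS, rfl⟩
        haveI : (U : Filter X).NeBot := U.neBot
        obtain ⟨t'', ht'', he⟩ := mem_closed_of_le_nhds hz (hclosed_j D hDcl) hjD
        exact htD (hj he ▸ ht'')
      rw [hzlim x hx, hzlim y hy]
  haveI := hXT2
  haveI : Nonempty G := ⟨1⟩
  haveI : Nonempty T := ⟨x₁⟩
  -- the compactification Y = closure of the image of G
  have hYcpt : CompactSpace ↥(closure (Set.range i)) :=
    isCompact_iff_compactSpace.mp isClosed_closure.isCompact
  have hιcont : Continuous ι := by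
    rw [continuous_induced_rng]
    have he : (Subtype.val ∘ ι) = i := funext hι
    rw [he]
    exact hicont
  have hιemb : Topology.IsEmbedding ι := by
    refine Topology.IsEmbedding.of_comp hιcont continuous_subtype_val ?_
    have he : (Subtype.val ∘ ι) = i := funext hι
    rw [he]
    exact hiemb.isEmbedding
  have hrange_ι : Set.range ι = Subtype.val ⁻¹' (Set.range i) := by
    ext y
    constructor
    · rintro ⟨g, rfl⟩
      exact ⟨g, (hι g).symm⟩
    · rintro ⟨g, hg⟩
      exact ⟨g, Subtype.ext (by rw [hι]; exact hg)⟩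
  have hopen_ι : IsOpen (Set.range ι) := by
    rw [hrange_ι]
    exact hAopen.preimage continuous_subtype_val
  have hvalrange : Subtype.val '' (Set.range ι) = Set.range i := by
    rw [← Set.range_comp]
    exact congrArg Set.range (funext hι)
  have hdense_ι : Dense (Set.range ι) := by
    intro y
    rw [closure_subtype, hvalrange]
    exact y.2
  -- right multiplications
  have hinv : ∀ h : G, Function.invFun i (i h) = h := fun h => Function.leftInverse_invFun hi h
  have hinvj : ∀ t : T, Function.invFun j (j t) = t := fun t => Function.leftInverse_invFun hj t
  set r : G → X → X := fun g x => if x ∈ Set.range i then i (Function.invFun i x * g) else x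
    with hrdef
  have hri : ∀ (g h : G), r g (i h) = i (h * g) := by
    intro g h
    rw [hrdef]
    simp only
    rw [if_pos (mem_range_self h), hinv]
  have hrB : ∀ (g : G) (x : X), x ∉ Set.range i → r g x = x := by
    intro g x hx
    rw [hrdef]
    simp only
    rw [if_neg hx]
  have hFcont : Continuous (fun p : G × X => r p.1 p.2) := by
    rw [continuous_iff_continuousAt]
    rintro ⟨g0, x0⟩
    by_cases hx0 : x0 ∈ Set.range i
    · obtain ⟨h0, rfl⟩ := hx0
      unfold ContinuousAt
      rw [Filter.tendsto_def]
      intro W hW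
      simp only [hri g0 h0] at hW
      have hW' : i ⁻¹' W ∈ 𝓝 (h0 * g0) := hicont.continuousAt hW
      have hmul : Tendsto (fun p : G × G => p.1 * p.2) (𝓝 (h0, g0)) (𝓝 (h0 * g0)) :=
        (continuous_mul (M := G)).continuousAt
      obtain ⟨V1, hV1, V2, hV2, hV12⟩ := mem_nhds_prod_iff.mp (hmul hW')
      have hnb : V2 ×ˢ (i '' interior V1) ∈ 𝓝 (g0, i h0) :=
        prod_mem_nhds hV2 ((hiopen _ isOpen_interior).mem_nhds
          ⟨h0, mem_interior_iff_mem_nhds.mpr hV1, rfl⟩)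
      refine Filter.mem_of_superset hnb ?_
      rintro ⟨g, x⟩ ⟨hgV2, h, hh, rfl⟩
      have : (h, g) ∈ V1 ×ˢ V2 := ⟨interior_subset hh, hgV2⟩
      have hmem := hV12 this
      simp only [mem_preimage] at hmem ⊢
      rw [hri]
      exact hmem
    · obtain ⟨t0, rfl⟩ := hmemA x0 hx0
      unfold ContinuousAt
      rw [Filter.tendsto_def]
      intro W hW
      simp only [hrB g0 _ hx0] at hW
      obtain ⟨W', hW'sub, hW'o, hW'mem⟩ := mem_nhds_iff.mp hW
      set P : Set X := W'ᶜ with hPdef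
      have hPcl : IsClosed P := hW'o.isClosed_compl
      obtain ⟨hP1, hP2, hP3⟩ := (hchar P).mp hPcl
      obtain ⟨Q, hQcpt, hQn⟩ := exists_compact_mem_nhds g0
      set Ht : Set G := i ⁻¹' P * Q⁻¹ with hHtdef
      have hHtcl : IsClosed Ht := hP1.mul_right_of_isCompact hQcpt.inv
      have hattrHt : attractorPtsF (fun (g : G) (t : T) => g • t) Ht ⊆ j ⁻¹' P :=
        (attractor_mul_compact hQcpt.inv).trans hP3
      have hPt_cl : IsClosed (i '' Ht ∪ j '' (j ⁻¹' P)) := by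
        rw [hchar]
        have e1 : i ⁻¹' (i '' Ht ∪ j '' (j ⁻¹' P)) = Ht := by
          rw [preimage_union, hpre_ii, hpre_ij, union_empty]
        have e2 : j ⁻¹' (i '' Ht ∪ j '' (j ⁻¹' P)) = j ⁻¹' P := by
          rw [preimage_union, hpre_ji, hpre_jj, empty_union]
        rw [e1, e2]
        exact ⟨hHtcl, hPcl.preimage hjcont, hattrHt⟩
      have hx0notin : j t0 ∉ i '' Ht ∪ j '' (j ⁻¹' P) := by
        rintro (⟨g', -, hg'⟩ | ⟨t', ht', he⟩)
        · exact hne g' t0 hg'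
        · exact (show j t0 ∈ P from hj he ▸ ht') hW'mem
      have hnb : interior Q ×ˢ (i '' Ht ∪ j '' (j ⁻¹' P))ᶜ ∈ 𝓝 (g0, j t0) :=
        prod_mem_nhds (isOpen_interior.mem_nhds (mem_interior_iff_mem_nhds.mpr hQn))
          (hPt_cl.isOpen_compl.mem_nhds hx0notin)
      refine Filter.mem_of_superset hnb ?_
      rintro ⟨g, x⟩ ⟨hgQ, hxP⟩
      simp only [mem_preimage]
      by_cases hxA : x ∈ Set.range i
      · obtain ⟨h, rfl⟩ := hxA
        rw [hri]
        have hhg : h * g ∉ i ⁻¹' P := by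
          intro hmem
          apply hxP
          left
          have heq : h = (h * g) * g⁻¹ := by group
          exact ⟨h, heq ▸ Set.mul_mem_mul hmem (Set.inv_mem_inv.mpr (interior_subset hgQ)),
            rfl⟩
        exact hW'sub (notMem_compl_iff.mp hhg)
      · rw [hrB g x hxA]
        have hxnP : x ∉ P := by
          obtain ⟨t', rfl⟩ := hmemA x hxA
          intro hb
          exact hxP (Or.inr ⟨t', hb, rfl⟩)
        exact hW'sub (notMem_compl_iff.mp hxnP)
  have hRmem : ∀ (g : G) (y : ↥(closure (Set.range i))), r g ↑y ∈ closure (Set.range i) := by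
    intro g y
    by_cases hy : (y : X) ∈ Set.range i
    · obtain ⟨h, hh⟩ := hy
      rw [← hh, hri]
      exact subset_closure (mem_range_self _)
    · rw [hrB g _ hy]
      exact y.2
  have hright : ∃ R : G → ↥(closure (Set.range i)) → ↥(closure (Set.range i)),
      (∀ g h : G, R g (ι h) = ι (h * g)) ∧
      (∀ (g : G) (y : ↥(closure (Set.range i))), y ∉ Set.range ι → R g y = y) ∧
      Continuous fun p : G × ↥(closure (Set.range i)) => R p.1 p.2 := by
    refine ⟨fun g y => ⟨r g ↑y, hRmem g y⟩, ?_, ?_, ?_⟩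
    · intro g h
      apply Subtype.ext
      show r g ↑(ι h) = ↑(ι (h * g))
      rw [hι, hι, hri]
    · intro g y hy
      apply Subtype.ext
      show r g ↑y = ↑y
      apply hrB
      intro hmem
      exact hy (by rw [hrange_ι]; exact hmem)
    · rw [continuous_induced_rng]
      exact hFcont.comp (continuous_fst.prodMk (continuous_subtype_val.comp continuous_snd))
  -- left translations
  have hleft : ∀ g : G, ∃ Lg : ↥(closure (Set.range i)) → ↥(closure (Set.range i)),
      Continuous Lg ∧ ∀ h : G, Lg (ι h) = ι (g * h) := by
    intro g
    set lam : X → X := fun x => if x ∈ Set.range i then i (g * Function.invFun i x)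
      else j (g • Function.invFun j x) with hlamdef
    have hlami : ∀ h : G, lam (i h) = i (g * h) := by
      intro h
      rw [hlamdef]
      simp only
      rw [if_pos (mem_range_self h), hinv]
    have hlamj : ∀ t : T, lam (j t) = j (g • t) := by
      intro t
      rw [hlamdef]
      simp only
      rw [if_neg (fun ⟨g', hg'⟩ => hne g' t hg'), hinvj]
    have hlamcont : Continuous lam := by
      rw [continuous_iff_isClosed]
      intro P hP
      obtain ⟨hP1, hP2, hP3⟩ := (hchar P).mp hP
      rw [hchar]
      have e1 : i ⁻¹' (lam ⁻¹' P) = (fun h => g * h) ⁻¹' (i ⁻¹' P) := by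
        ext h
        simp only [mem_preimage, hlami h]
      have e2 : j ⁻¹' (lam ⁻¹' P) = (fun t => g • t) ⁻¹' (j ⁻¹' P) := by
        ext t
        simp only [mem_preimage, hlamj t]
      rw [e1, e2]
      refine ⟨hP1.preimage (continuous_mul_left g), hP2.preimage (continuous_const_smul g), ?_⟩
      intro u hu
      exact hP3 (attractor_translate g hu)
    have hmemY : ∀ y : ↥(closure (Set.range i)), lam ↑y ∈ closure (Set.range i) := by
      intro y
      have h1 : lam '' closure (Set.range i) ⊆ closure (lam '' Set.range i) :=
        image_closure_subset_closure_image hlamcont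
      have h2 : lam '' Set.range i ⊆ Set.range i := by
        rintro z ⟨w, ⟨h, rfl⟩, rfl⟩
        rw [hlami]
        exact mem_range_self _
      exact (closure_mono h2) (h1 (mem_image_of_mem lam y.2))
    refine ⟨fun y => ⟨lam ↑y, hmemY y⟩, ?_, ?_⟩
    · rw [continuous_induced_rng]
      exact hlamcont.comp continuous_subtype_val
    · intro h
      apply Subtype.ext
      show lam ↑(ι h) = ↑(ι (g * h))
      rw [hι, hι, hlami]
  refine ⟨⟨hYcpt, inferInstance, hιemb, hopen_ι, hdense_ι, hright, hleft⟩, ?_⟩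
  -- total disconnectedness of the boundary
  intro hΛ
  have hΛcl : IsClosed (limitSetF (fun (g : G) (t : T) => g • t)) := isClosed_limitSetF hconv hT
  have hYsub : closure (Set.range i) ⊆
      Set.range i ∪ j '' (limitSetF (fun (g : G) (t : T) => g • t)) := by
    apply closure_minimal subset_union_left
    rw [hchar]
    have e1 : i ⁻¹' (Set.range i ∪ j '' (limitSetF (fun (g : G) (t : T) => g • t))) = univ := by
      rw [preimage_union, hpre_ij]
      simp [preimage_range]
    have e2 : j ⁻¹' (Set.range i ∪ j '' (limitSetF (fun (g : G) (t : T) => g • t))) =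
        limitSetF (fun (g : G) (t : T) => g • t) := by
      rw [preimage_union, hpre_jj]
      have : j ⁻¹' (Set.range i) = ∅ := by rw [← image_univ, hpre_ji]
      rw [this, empty_union]
    rw [e1, e2, attractorPtsF_univ]
    exact ⟨isClosed_univ, hΛcl, subset_rfl⟩
  have hjemb : Topology.IsEmbedding j := (hjcont.isClosedEmbedding hj).isEmbedding
  have hjtd : IsTotallyDisconnected (j '' limitSetF (fun (g : G) (t : T) => g • t)) :=
    (hjemb.isTotallyDisconnected_image).mpr hΛ
  have hsub : Subtype.val '' ((Set.range ι)ᶜ : Set ↥(closure (Set.range i))) ⊆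
      j '' limitSetF (fun (g : G) (t : T) => g • t) := by
    rintro x ⟨y, hy, rfl⟩
    have h1 : (y : X) ∉ Set.range i := by
      intro hmem
      exact hy (by rw [hrange_ι]; exact hmem)
    rcases hYsub y.2 with h | h
    · exact absurd h h1
    · exact h
  have hvaltd : IsTotallyDisconnected
      (Subtype.val '' ((Set.range ι)ᶜ : Set ↥(closure (Set.range i)))) :=
    fun u hu hp => hjtd u (hu.trans hsub) hp
  exact Topology.IsEmbedding.subtypeVal.isTotallyDisconnected hvaltd
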